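/- Let n ≥ 1 and let p, t, a_1, …, a_6 be nonzero complex numbers with |p| < 1, with parameters generic so that the reference points ζ^{(s)} are not poles of any F_i^+. Then for every 0 ≤ s ≤ n and every 1 ≤ i ≤ n with i ≠ s and i ≠ n, F_i^+(ζ^{(s)}) = 0. -/

import Mathlib

open Finset

/-- The theta function `θ(z;p) = ∏_{i≥0} (1 - p^i z)(1 - p^{i+1}/z)`. -/
noncomputable def theta (p z : ℂ) : ℂ :=
  ∏' i : ℕ, ((1 - p ^ i * z) * (1 - p ^ (i + 1) * z⁻¹))

/-- The theta shifted factorial `θ(z;p;q)_k = ∏_{j=0}^{k-1} θ(q^j z;p)`. -/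
noncomputable def thetaPoch (p q z : ℂ) (k : ℕ) : ℂ :=
  ∏ j ∈ Finset.range k, theta p (q ^ j * z)

/-- `θ(x u^{±1};p) = θ(xu;p) θ(x/u;p)`. -/
noncomputable def thetaPm (p x u : ℂ) : ℂ :=
  theta p (x * u) * theta p (x * u⁻¹)

/-- The fundamental `BC_n` invariant `E_r(a₁,a₂;z)`, as a sum over the subsets
`S = {i_1 < … < i_r}` of `{0,…,n-1}` (0-based indexing); for `i ∈ S`,
`(S.filter (· < i)).card` is the (0-based) rank of `i` in `S`. -/
noncomputable def Efun (p t a₁ a₂ : ℂ) {n : ℕ} (r : ℕ) (z : Fin n → ℂ) : ℂ :=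
  ∑ S ∈ Finset.powersetCard r (Finset.univ : Finset (Fin n)),
    (∏ i ∈ S,
        thetaPm p (a₂ * t ^ ((i : ℕ) - (S.filter (fun j => j < i)).card)) (z i) /
          thetaPm p (a₂ * t ^ ((i : ℕ) - (S.filter (fun j => j < i)).card))
            (a₁ * t ^ (S.filter (fun j => j < i)).card)) *
    (∏ i ∈ Sᶜ,
        thetaPm p (a₁ * t ^ ((i : ℕ) - (Sᶜ.filter (fun j => j < i)).card)) (z i) /
          thetaPm p (a₁ * t ^ ((i : ℕ) - (Sᶜ.filter (fun j => j < i)).card))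
            (a₂ * t ^ (Sᶜ.filter (fun j => j < i)).card))

/-- Genericity: all theta denominators appearing in the fundamental invariants are nonzero. -/
def eDenomsNZ (p t a₁ a₂ : ℂ) (n : ℕ) : Prop :=
  ∀ k l : ℕ, k < n → l < n →
    thetaPm p (a₂ * t ^ k) (a₁ * t ^ l) ≠ 0 ∧ thetaPm p (a₁ * t ^ k) (a₂ * t ^ l) ≠ 0

/-- The reference point `ζ^{(s)} = (a₁, a₁t, …, a₁ t^{s-1}, a₂, a₂ t, …, a₂ t^{n-s-1})`. -/
noncomputable def zetaPt (a₁ a₂ t : ℂ) (n s : ℕ) : Fin n → ℂ :=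
  fun i => if (i : ℕ) < s then a₁ * t ^ (i : ℕ) else a₂ * t ^ ((i : ℕ) - s)

/-- `F_i^+(z)`. -/
noncomputable def Fplus (p t : ℂ) (a : Fin 6 → ℂ) {n : ℕ} (i : Fin n) (z : Fin n → ℂ) : ℂ :=
  ((∏ m : Fin 6, theta p (a m * z i)) / ((z i) ^ 2 * theta p ((z i) ^ 2))) *
    ∏ j ∈ Finset.univ.erase i, thetaPm p (t * z i) (z j) / thetaPm p (z i) (z j)

/-- `F_i^-(z) = F_i^+(z_1, …, z_i⁻¹, …, z_n)`. -/
noncomputable def Fminus (p t : ℂ) (a : Fin 6 → ℂ) {n : ℕ} (i : Fin n) (z : Fin n → ℂ) : ℂ :=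
  Fplus p t a i (Function.update z i (z i)⁻¹)

/-- None of the theta denominators of `F_i^+` vanishes at `z`. -/
def FplusDenomNZ (p : ℂ) {n : ℕ} (i : Fin n) (z : Fin n → ℂ) : Prop :=
  theta p ((z i) ^ 2) ≠ 0 ∧ ∀ j, j ≠ i → thetaPm p (z i) (z j) ≠ 0

/-- None of the theta denominators of `F_i^-` vanishes at `z`. -/
def FminusDenomNZ (p : ℂ) {n : ℕ} (i : Fin n) (z : Fin n → ℂ) : Prop :=
  FplusDenomNZ p i (Function.update z i (z i)⁻¹)

/-- `h_r(z) = Σ_i (F_i^-(z) + F_i^+(z)) E_{r-1}^{(n-1)}(z_1,…,ẑ_i,…,z_n)`, in `n+1` variables. -/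
noncomputable def hFun (p t : ℂ) (a : Fin 6 → ℂ) (n r : ℕ) (z : Fin (n + 1) → ℂ) : ℂ :=
  ∑ i : Fin (n + 1),
    (Fminus p t a i z + Fplus p t a i z) *
      Efun p t (a 0) (a 1) (r - 1) (fun j : Fin n => z (i.succAbove j))

/-- The base point `ξ = (a₁, a₁ t, …, a₁ t^{n-1})`. -/
noncomputable def xiPt (a₁ t : ℂ) (n : ℕ) : Fin n → ℂ := fun i => a₁ * t ^ (i : ℕ)

/-- The weight `W(ν) = Φ(q^ν ξ)/Φ(ξ)` of the truncated Jackson integral. -/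
noncomputable def weight (p q t : ℂ) (a : Fin 6 → ℂ) (n : ℕ) (ν : Fin n → ℕ) : ℂ :=
  (∏ i : Fin n,
      (q ^ 2 * (a 0 * a 1 * a 2 * a 3 * a 4 * a 5 * t ^ (2 * n - 2))⁻¹ *
            t ^ (2 * (n - 1 - (i : ℕ)))) ^ ν i *
        theta p (q ^ (2 * ν i) * xiPt (a 0) t n i ^ 2) / theta p (xiPt (a 0) t n i ^ 2)) *
  (∏ j : Fin n, ∏ k ∈ Finset.Ioi j,
      theta p (q ^ (ν k - ν j) * (xiPt (a 0) t n k / xiPt (a 0) t n j)) *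
          theta p (q ^ (ν j + ν k) * (xiPt (a 0) t n j * xiPt (a 0) t n k)) /
        (theta p (xiPt (a 0) t n k / xiPt (a 0) t n j) *
          theta p (xiPt (a 0) t n j * xiPt (a 0) t n k))) *
  (∏ i : Fin n, ∏ m : Fin 6,
      thetaPoch p q (a m * xiPt (a 0) t n i) (ν i) /
        thetaPoch p q (q * (a m)⁻¹ * xiPt (a 0) t n i) (ν i)) *
  (∏ j : Fin n, ∏ k ∈ Finset.Ioi j,
      thetaPoch p q (t * (xiPt (a 0) t n k / xiPt (a 0) t n j)) (ν k - ν j) *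
          thetaPoch p q (t * (xiPt (a 0) t n j * xiPt (a 0) t n k)) (ν j + ν k) /
        (thetaPoch p q (q * t⁻¹ * (xiPt (a 0) t n k / xiPt (a 0) t n j)) (ν k - ν j) *
          thetaPoch p q (q * t⁻¹ * (xiPt (a 0) t n j * xiPt (a 0) t n k)) (ν j + ν k)))

/-- The truncated Jackson integral `⟨φ⟩ = Σ_{0 ≤ ν₁ ≤ … ≤ ν_n ≤ N} W(ν) φ(q^ν ξ)`. -/
noncomputable def jackson (p q t : ℂ) (a : Fin 6 → ℂ) (n N : ℕ)
    (φ : (Fin n → ℂ) → ℂ) : ℂ :=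
  ∑ ν ∈ Finset.univ.filter
      (fun ν : Fin n → Fin (N + 1) => ∀ i j : Fin n, i ≤ j → ν i ≤ ν j),
    weight p q t a n (fun i => (ν i : ℕ)) *
      φ (fun i => q ^ (ν i : ℕ) * xiPt (a 0) t n i)

/-- Genericity: all theta denominators appearing in the weight `W(ν)`,
for `0 ≤ ν₁ ≤ … ≤ ν_n ≤ N`, are nonzero. -/
def weightDenomsNZ (p q t : ℂ) (a : Fin 6 → ℂ) (n N : ℕ) : Prop :=
  (∀ i : Fin n, theta p (xiPt (a 0) t n i ^ 2) ≠ 0) ∧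
  (∀ j k : Fin n, j < k →
      theta p (xiPt (a 0) t n k / xiPt (a 0) t n j) ≠ 0 ∧
        theta p (xiPt (a 0) t n j * xiPt (a 0) t n k) ≠ 0) ∧
  (∀ (m : Fin 6) (i : Fin n) (k : ℕ), k ≤ N →
      thetaPoch p q (q * (a m)⁻¹ * xiPt (a 0) t n i) k ≠ 0) ∧
  (∀ j k : Fin n, j < k → ∀ l : ℕ, l ≤ 2 * N →
      thetaPoch p q (q * t⁻¹ * (xiPt (a 0) t n k / xiPt (a 0) t n j)) l ≠ 0 ∧
        thetaPoch p q (q * t⁻¹ * (xiPt (a 0) t n j * xiPt (a 0) t n k)) l ≠ 0)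
theorem theta_one (p : ℂ) : theta p 1 = 0 :=
  tprod_of_exists_eq_zero ⟨0, by simp⟩

theorem thetaPm_self (p : ℂ) {x : ℂ} (hx : x ≠ 0) : thetaPm p x x = 0 := by
  rw [thetaPm, mul_inv_cancel₀ hx, theta_one, mul_zero]

/-- The numerator factor `θ(t z_i / z_j; p)` becomes `θ(1; p) = 0`. -/
theorem Fplus_eq_zero_of_eq_mul (p t : ℂ) (a : Fin 6 → ℂ) {n : ℕ} {i j : Fin n}
    {z : Fin n → ℂ} (hji : j ≠ i) (hzj : z j = t * z i) (hz : z j ≠ 0) :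
    Fplus p t a i z = 0 := by
  rw [Fplus, Finset.prod_eq_zero (Finset.mem_erase.2 ⟨hji, Finset.mem_univ j⟩)
    (by rw [← hzj, thetaPm_self p hz, zero_div]), mul_zero]

theorem zetaPt_ne_zero {a₁ a₂ t : ℂ} (h₁ : a₁ ≠ 0) (h₂ : a₂ ≠ 0) (ht : t ≠ 0) (n s : ℕ)
    (i : Fin n) : zetaPt a₁ a₂ t n s i ≠ 0 := by
  unfold zetaPt
  split_ifs <;> exact mul_ne_zero ‹_› (pow_ne_zero _ ht)

theorem zetaPt_eq_mul_of_val_eq_succ (a₁ a₂ t : ℂ) {n s : ℕ} {i j : Fin n}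
    (hj : (j : ℕ) = i + 1) (hjs : (j : ℕ) ≠ s) :
    zetaPt a₁ a₂ t n s j = t * zetaPt a₁ a₂ t n s i := by
  unfold zetaPt
  rw [hj] at hjs ⊢
  by_cases hi : (i : ℕ) < s
  · rw [if_pos (lt_of_le_of_ne hi hjs), if_pos hi, pow_succ]
    ring
  · rw [if_neg (by omega), if_neg hi, Nat.sub_add_comm (by omega), pow_succ]
    ring

/-- Indices are 0-based: the paper's index `i` is `(i : ℕ) + 1` here. -/
theorem Fplus_vanishes_at_zeta_general (n : ℕ) (p t : ℂ) (a : Fin 6 → ℂ)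
    (ht : t ≠ 0) (ha : ∀ m, a m ≠ 0)
    (s : ℕ) (i : Fin n) (his : (i : ℕ) + 1 ≠ s) (hin : (i : ℕ) + 1 ≠ n) :
    Fplus p t a i (zetaPt (a 0) (a 1) t n s) = 0 := by
  let j : Fin n := ⟨i + 1, lt_of_le_of_ne i.isLt hin⟩
  have hji : j ≠ i := Fin.ne_of_val_ne (Nat.succ_ne_self i)
  exact Fplus_eq_zero_of_eq_mul p t a hji (zetaPt_eq_mul_of_val_eq_succ _ _ t rfl his)
    (zetaPt_ne_zero (ha 0) (ha 1) ht n s j)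

/-- `F_i^+(ζ^{(s)}) = 0` for `i ≠ s` and `i ≠ n` (1-based indexing:
the index `i` here is `(i : ℕ) + 1`). -/
theorem Fplus_vanishes_at_zeta (n : ℕ) (hn : 1 ≤ n) (p t : ℂ) (a : Fin 6 → ℂ)
    (hp : ‖p‖ < 1) (hp0 : p ≠ 0) (ht : t ≠ 0) (ha : ∀ m, a m ≠ 0)
    (s : ℕ) (hs : s ≤ n) (i : Fin n) (his : (i : ℕ) + 1 ≠ s) (hin : (i : ℕ) + 1 ≠ n)
    (hgen : FplusDenomNZ p i (zetaPt (a 0) (a 1) t n s)) :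
    Fplus p t a i (zetaPt (a 0) (a 1) t n s) = 0 :=
  Fplus_vanishes_at_zeta_general n p t a ht ha s i his hin
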